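/- Let a, b, c, d ∈ ℂ⁴ with det[a b c d] ≠ 0, so that ℓ := span{a,b} and m := span{c,d} are two skew lines in P³. Let P and Q be the primal Plücker matrices of (a,b) and (c,d) respectively, and let x ∈ ℂ⁴ with x ∉ ℓ ∪ m. Define M := P x xᵀ Q − Q x xᵀ P. Then: (i) M is skew-symmetric and M ≠ 0; (ii) the kernel of M is a 2-dimensional subspace of ℂ⁴; (iii) x ∈ ker M; and (iv) ker M ∩ ℓ ≠ {0} and ker M ∩ m ≠ {0}. Thus M represents the unique line through x that meets both slits ℓ and m (the image of x under the two-slit camera). -/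

import Mathlib

open Matrix

/-- The primal Plücker matrix of a pair of vectors `x y : ℂ⁴`. -/
noncomputable def primalMat (x y : Fin 4 → ℂ) : Matrix (Fin 4) (Fin 4) ℂ :=
  !![0, x 2 * y 3 - x 3 * y 2, -(x 1 * y 3 - x 3 * y 1), x 1 * y 2 - x 2 * y 1;
     -(x 2 * y 3 - x 3 * y 2), 0, x 0 * y 3 - x 3 * y 0, -(x 0 * y 2 - x 2 * y 0);
     x 1 * y 3 - x 3 * y 1, -(x 0 * y 3 - x 3 * y 0), 0, x 0 * y 1 - x 1 * y 0;
     -(x 1 * y 2 - x 2 * y 1), x 0 * y 2 - x 2 * y 0, -(x 0 * y 1 - x 1 * y 0), 0]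

/-!
Write `x = p + q` with `p ∈ ℓ = span{a, b}` and `q ∈ m = span{c, d}`. The Plücker matrix `P` of
`ℓ` is the skew form `(w, z) ↦ det[a, b, w, z]`, so it kills `ℓ` and is injective on `m`; hence
`P x = P q ≠ 0`, `Q x = Q p ≠ 0`, and `M = u vᵀ - v uᵀ` with `u = Q p`, `v = P q`. Since `v`
annihilates `ℓ` and `u` annihilates `m`, and `ℓ + m = ℂ⁴`, the vectors `u, v` are independent, so
`ker M = u^⊥ ∩ v^⊥` is a plane; it contains `p` and `q` because `P` and `Q` are alternating.
-/

open Submodule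

namespace Matrix

variable {n K : Type*}

def wedge [CommRing K] (u v : n → K) : Matrix n n K :=
  vecMulVec u v - vecMulVec v u

section CommRing

variable [CommRing K] (u v w : n → K)

theorem wedge_transpose : (wedge u v)ᵀ = -wedge u v := by
  simp [wedge, transpose_vecMulVec]

variable [Fintype n]

theorem wedge_mulVec : wedge u v *ᵥ w = (v ⬝ᵥ w) • u - (u ⬝ᵥ w) • v := by
  simp [wedge, sub_mulVec, vecMulVec_mulVec]

variable {u v w}

theorem wedge_mulVec_eq_zero (hu : u ⬝ᵥ w = 0) (hv : v ⬝ᵥ w = 0) : wedge u v *ᵥ w = 0 := by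
  simp [wedge_mulVec, hu, hv]

theorem mul_vecMulVec_mul_sub_mul_vecMulVec_mul {A B : Matrix n n K} (hA : Aᵀ = -A)
    (hB : Bᵀ = -B) (x : n → K) :
    A * vecMulVec x x * B - B * vecMulVec x x * A = wedge (B *ᵥ x) (A *ᵥ x) := by
  simp only [mul_vecMulVec, vecMulVec_mul, ← mulVec_transpose, hA, hB, neg_mulVec,
    vecMulVec_neg, wedge]
  abel

end CommRing

section Field

variable [Fintype n] [Field K] {u v : n → K}

theorem dotProduct_eq_zero_of_wedge_mulVec_eq_zero (h : LinearIndependent K ![u, v])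
    {w : n → K} (hw : wedge u v *ᵥ w = 0) : u ⬝ᵥ w = 0 ∧ v ⬝ᵥ w = 0 := by
  rw [wedge_mulVec, sub_eq_add_neg, ← neg_smul] at hw
  obtain ⟨hv, hu⟩ := LinearIndependent.pair_iff.1 h _ _ hw
  exact ⟨neg_eq_zero.1 hu, hv⟩

theorem ker_wedge (h : LinearIndependent K ![u, v]) :
    LinearMap.ker (wedge u v).mulVecLin = LinearMap.ker (of ![u, v]).mulVecLin := by
  ext w
  simp only [LinearMap.mem_ker, mulVecLin_apply, cons_mulVec, cons_eq_zero_iff]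
  constructor
  · intro hw
    simpa using dotProduct_eq_zero_of_wedge_mulVec_eq_zero h hw
  · intro ⟨hu, hv, _⟩
    exact wedge_mulVec_eq_zero hu hv

theorem finrank_ker_wedge (h : LinearIndependent K ![u, v]) :
    Module.finrank K (LinearMap.ker (wedge u v).mulVecLin) = Fintype.card n - 2 := by
  have hrank : (of ![u, v]).rank = 2 := by simpa using h.rank_matrix (M := of ![u, v])
  have hsum := LinearMap.finrank_range_add_finrank_ker (of ![u, v]).mulVecLin
  rw [Module.finrank_fintype_fun_eq_card] at hsum
  change (of ![u, v]).rank + _ = _ at hsum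
  rw [ker_wedge h]
  omega

theorem wedge_ne_zero (h : LinearIndependent K ![u, v]) : wedge u v ≠ 0 := by
  intro h0
  have hv : v = 0 := dotProduct_eq_zero _ fun w =>
    (dotProduct_eq_zero_of_wedge_mulVec_eq_zero h (by rw [h0, zero_mulVec])).2
  exact h.ne_zero 1 (by simpa using hv)

theorem linearIndependent_pair_of_dotProduct_eq_zero {V W : Submodule K (n → K)}
    (hVW : V ⊔ W = ⊤) (hu : u ≠ 0) (hv : v ≠ 0) (huW : ∀ w ∈ W, u ⬝ᵥ w = 0)
    (hvV : ∀ w ∈ V, v ⬝ᵥ w = 0) : LinearIndependent K ![u, v] := by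
  refine (LinearIndependent.pair_iff' hu).2 fun a hau => hv (dotProduct_eq_zero _ fun w => ?_)
  obtain ⟨y, hy, z, hz, rfl⟩ := mem_sup.1 (hVW ▸ mem_top : w ∈ V ⊔ W)
  rw [dotProduct_add, hvV y hy, ← hau, smul_dotProduct, huW z hz, smul_zero, add_zero]

theorem span_pair_sup_span_pair_eq_top {a b c d : Fin 4 → K} (h : (of ![a, b, c, d]).det ≠ 0) :
    span K {a, b} ⊔ span K {c, d} = ⊤ := by
  have hspan : span K (Set.range ![a, b, c, d]) = ⊤ :=
    (linearIndependent_rows_of_det_ne_zero h).span_eq_top_of_card_eq_finrank' (by simp)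
  rw [← span_union, ← hspan]
  congr 1
  ext x
  simp only [Set.mem_union, Set.mem_insert_iff, Set.mem_singleton_iff, range_cons, range_empty,
    Set.union_empty]
  tauto

end Field

theorem det_of_swap_pairs {R : Type*} [CommRing R] (a b c d : Fin 4 → R) :
    (of ![c, d, a, b]).det = (of ![a, b, c, d]).det := by
  have h : of ![c, d, a, b] =
      (of ![a, b, c, d]).submatrix (Equiv.swap (0 : Fin 4) 2 * Equiv.swap (1 : Fin 4) 3) id := by
    ext i j
    fin_cases i <;> simp [Equiv.swap_apply_def]
  rw [h, det_permute]
  simp [Equiv.Perm.sign_mul]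

end Matrix

section Plucker

variable (p q : Fin 4 → ℂ)

theorem dotProduct_primalMat_mulVec (w z : Fin 4 → ℂ) :
    w ⬝ᵥ primalMat p q *ᵥ z = (of ![p, q, w, z]).det := by
  simp [primalMat, mulVec, dotProduct, det_succ_row_zero, Fin.sum_univ_succ, Fin.succAbove]
  ring

theorem primalMat_transpose : (primalMat p q)ᵀ = -primalMat p q := by
  ext i j
  fin_cases i <;> fin_cases j <;> simp [primalMat]

theorem dotProduct_primalMat_mulVec_self (z : Fin 4 → ℂ) : z ⬝ᵥ primalMat p q *ᵥ z = 0 := by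
  rw [dotProduct_primalMat_mulVec]
  exact det_zero_of_row_eq (i := 2) (j := 3) (by decide) rfl

theorem dotProduct_primalMat_mulVec_comm (w z : Fin 4 → ℂ) :
    w ⬝ᵥ primalMat p q *ᵥ z = -(z ⬝ᵥ primalMat p q *ᵥ w) := by
  rw [dotProduct_mulVec, ← mulVec_transpose, primalMat_transpose, neg_mulVec, dotProduct_comm,
    dotProduct_neg]

theorem primalMat_mulVec_left : primalMat p q *ᵥ p = 0 :=
  dotProduct_eq_zero _ fun w => by
    rw [dotProduct_comm, dotProduct_primalMat_mulVec]
    exact det_zero_of_row_eq (i := 0) (j := 3) (by decide) rfl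

theorem primalMat_mulVec_right : primalMat p q *ᵥ q = 0 :=
  dotProduct_eq_zero _ fun w => by
    rw [dotProduct_comm, dotProduct_primalMat_mulVec]
    exact det_zero_of_row_eq (i := 1) (j := 3) (by decide) rfl

variable {p q}

theorem primalMat_mulVec_eq_zero_of_mem_span {z : Fin 4 → ℂ} (hz : z ∈ span ℂ {p, q}) :
    primalMat p q *ᵥ z = 0 := by
  obtain ⟨s, t, rfl⟩ := mem_span_pair.1 hz
  simp [mulVec_add, mulVec_smul, primalMat_mulVec_left, primalMat_mulVec_right]

theorem primalMat_mulVec_dotProduct_eq_zero_of_mem_span {w : Fin 4 → ℂ} (hw : w ∈ span ℂ {p, q})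
    (z : Fin 4 → ℂ) : primalMat p q *ᵥ z ⬝ᵥ w = 0 := by
  rw [dotProduct_comm, dotProduct_primalMat_mulVec_comm, primalMat_mulVec_eq_zero_of_mem_span hw,
    dotProduct_zero, neg_zero]

theorem primalMat_mulVec_ne_zero {c d z : Fin 4 → ℂ} (hD : (of ![p, q, c, d]).det ≠ 0)
    (hz : z ∈ span ℂ {c, d}) (hz0 : z ≠ 0) : primalMat p q *ᵥ z ≠ 0 := by
  obtain ⟨s, t, rfl⟩ := mem_span_pair.1 hz
  intro h
  rw [← dotProduct_primalMat_mulVec] at hD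
  have hc := congrArg (c ⬝ᵥ ·) h
  have hd := congrArg (d ⬝ᵥ ·) h
  simp only [mulVec_add, mulVec_smul, dotProduct_add, dotProduct_smul, dotProduct_zero,
    smul_eq_mul, dotProduct_primalMat_mulVec_self, dotProduct_primalMat_mulVec_comm p q d c,
    mul_zero, zero_add, add_zero, mul_neg, neg_eq_zero] at hc hd
  have ht : t = 0 := (mul_eq_zero.1 hc).resolve_right hD
  have hs : s = 0 := (mul_eq_zero.1 hd).resolve_right hD
  simp [hs, ht] at hz0

end Plucker

/-- the two-slit camera formula `M = P x xᵀ Q − Q x xᵀ P` represents the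
unique line through `x` meeting both skew slits `span{a,b}` and `span{c,d}`. -/
theorem two_slit_camera_line
    (a b c d x : Fin 4 → ℂ)
    (habcd : (Matrix.of ![a, b, c, d]).det ≠ 0)
    (hxl : x ∉ Submodule.span ℂ {a, b}) (hxm : x ∉ Submodule.span ℂ {c, d}) :
    let P := primalMat a b
    let Q := primalMat c d
    let M := P * Matrix.vecMulVec x x * Q - Q * Matrix.vecMulVec x x * P
    Mᵀ = -M ∧ M ≠ 0 ∧
      Module.finrank ℂ (LinearMap.ker M.mulVecLin) = 2 ∧
      x ∈ LinearMap.ker M.mulVecLin ∧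
      LinearMap.ker M.mulVecLin ⊓ Submodule.span ℂ {a, b} ≠ ⊥ ∧
      LinearMap.ker M.mulVecLin ⊓ Submodule.span ℂ {c, d} ≠ ⊥ := by
  intro P Q M
  have hsup := span_pair_sup_span_pair_eq_top habcd
  obtain ⟨p, hp, q, hq, rfl⟩ := mem_sup.1 (hsup ▸ mem_top : x ∈ span ℂ {a, b} ⊔ span ℂ {c, d})
  have hp0 : p ≠ 0 := by rintro rfl; exact hxm (by simpa using hq)
  have hq0 : q ≠ 0 := by rintro rfl; exact hxl (by simpa using hp)
  have hM : M = wedge (Q *ᵥ p) (P *ᵥ q) := by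
    have hQ : Q *ᵥ (p + q) = Q *ᵥ p := by
      rw [mulVec_add, primalMat_mulVec_eq_zero_of_mem_span hq, add_zero]
    have hP : P *ᵥ (p + q) = P *ᵥ q := by
      rw [mulVec_add, primalMat_mulVec_eq_zero_of_mem_span hp, zero_add]
    rw [← hQ, ← hP]
    exact mul_vecMulVec_mul_sub_mul_vecMulVec_mul (primalMat_transpose a b)
      (primalMat_transpose c d) _
  have huv : LinearIndependent ℂ ![Q *ᵥ p, P *ᵥ q] :=
    linearIndependent_pair_of_dotProduct_eq_zero hsup
      (primalMat_mulVec_ne_zero (by rwa [det_of_swap_pairs]) hp hp0)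
      (primalMat_mulVec_ne_zero habcd hq hq0)
      (fun w hw => primalMat_mulVec_dotProduct_eq_zero_of_mem_span hw p)
      (fun w hw => primalMat_mulVec_dotProduct_eq_zero_of_mem_span hw q)
  have hpker : p ∈ LinearMap.ker M.mulVecLin := by
    rw [LinearMap.mem_ker, mulVecLin_apply, hM]
    exact wedge_mulVec_eq_zero (by rw [dotProduct_comm, dotProduct_primalMat_mulVec_self])
      (primalMat_mulVec_dotProduct_eq_zero_of_mem_span hp q)
  have hqker : q ∈ LinearMap.ker M.mulVecLin := by
    rw [LinearMap.mem_ker, mulVecLin_apply, hM]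
    exact wedge_mulVec_eq_zero (primalMat_mulVec_dotProduct_eq_zero_of_mem_span hq p)
      (by rw [dotProduct_comm, dotProduct_primalMat_mulVec_self])
  rw [hM] at hpker hqker ⊢
  exact ⟨wedge_transpose _ _, wedge_ne_zero huv, by simp [finrank_ker_wedge huv],
    add_mem hpker hqker, (Submodule.ne_bot_iff _).2 ⟨p, ⟨hpker, hp⟩, hp0⟩,
    (Submodule.ne_bot_iff _).2 ⟨q, ⟨hqker, hq⟩, hq0⟩⟩
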